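/- Let I and J be finite sets of pairwise distinct labels and let σ_l (l ∈ I) and τ_l (l ∈ J) be types in 𝕋. Then ⟨l:σ_l | l ∈ I⟩ ∩ ⟨l:τ_l | l ∈ J⟩ = ⟨l:σ_l, l′:τ_{l′}, l″:σ_{l″}∩τ_{l″} | l ∈ I∖J, l′ ∈ J∖I, l″ ∈ I∩J⟩, i.e. the intersection of two record types is the record type whose entries are σ_l on I∖J, τ_{l′} on J∖I, and σ_{l″}∩τ_{l″} on I∩J. -/
import Mathlib


/-- Intersection and record types `𝕋`. Record types are the types satisfying `IsRec`. -/
inductive Ty where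
  | const : Nat → Ty
  | omega : Ty
  | arrow : Ty → Ty → Ty
  | inter : Ty → Ty → Ty
  | empty : Ty
  | fld : Nat → Ty → Ty
  | merge : Ty → Ty → Ty
deriving DecidableEq

/-- The record types `𝕋_R ⊆ 𝕋`. -/
inductive IsRec : Ty → Prop where
  | empty : IsRec .empty
  | fld (l : Nat) (σ : Ty) : IsRec (.fld l σ)
  | merge {ρ₁ ρ₂ : Ty} : IsRec ρ₁ → IsRec ρ₂ → IsRec (.merge ρ₁ ρ₂)
  | inter {ρ₁ ρ₂ : Ty} : IsRec ρ₁ → IsRec ρ₂ → IsRec (.inter ρ₁ ρ₂)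

/-- Subtyping on `𝕋`: the least preorder satisfying the BCD axioms together with
the record and record-merge axioms. -/
inductive TySub : Ty → Ty → Prop where
  | refl (σ : Ty) : TySub σ σ
  | trans {σ τ υ : Ty} : TySub σ τ → TySub τ υ → TySub σ υ
  | le_omega (σ : Ty) : TySub σ .omega
  | omega_arrow : TySub .omega (.arrow .omega .omega)
  | inter_left (σ τ : Ty) : TySub (.inter σ τ) σ
  | inter_right (σ τ : Ty) : TySub (.inter σ τ) τ
  | le_inter {σ τ₁ τ₂ : Ty} : TySub σ τ₁ → TySub σ τ₂ → TySub σ (.inter τ₁ τ₂)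
  | arrow_inter (σ τ₁ τ₂ : Ty) :
      TySub (.inter (.arrow σ τ₁) (.arrow σ τ₂)) (.arrow σ (.inter τ₁ τ₂))
  | arrow_mono {σ₁ σ₂ τ₁ τ₂ : Ty} : TySub σ₂ σ₁ → TySub τ₁ τ₂ →
      TySub (.arrow σ₁ τ₁) (.arrow σ₂ τ₂)
  | fld_empty (l : Nat) (σ : Ty) : TySub (.fld l σ) .empty
  | fld_inter (l : Nat) (σ τ : Ty) :
      TySub (.inter (.fld l σ) (.fld l τ)) (.fld l (.inter σ τ))
  | fld_mono {σ τ : Ty} (l : Nat) : TySub σ τ → TySub (.fld l σ) (.fld l τ)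
  | merge_empty_r {ρ : Ty} : IsRec ρ → TySub (.merge ρ .empty) ρ
  | merge_empty_r' {ρ : Ty} : IsRec ρ → TySub ρ (.merge ρ .empty)
  | merge_empty_l {ρ : Ty} : IsRec ρ → TySub (.merge .empty ρ) ρ
  | merge_empty_l' {ρ : Ty} : IsRec ρ → TySub ρ (.merge .empty ρ)
  | merge_assoc {ρ₁ ρ₂ ρ₃ : Ty} : IsRec ρ₁ → IsRec ρ₂ → IsRec ρ₃ →
      TySub (.merge (.merge ρ₁ ρ₂) ρ₃) (.merge ρ₁ (.merge ρ₂ ρ₃))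
  | merge_assoc' {ρ₁ ρ₂ ρ₃ : Ty} : IsRec ρ₁ → IsRec ρ₂ → IsRec ρ₃ →
      TySub (.merge ρ₁ (.merge ρ₂ ρ₃)) (.merge (.merge ρ₁ ρ₂) ρ₃)
  | merge_inter {ρ₁ ρ₂ ρ₃ : Ty} : IsRec ρ₁ → IsRec ρ₂ → IsRec ρ₃ →
      TySub (.merge (.inter ρ₁ ρ₂) ρ₃) (.inter (.merge ρ₁ ρ₃) (.merge ρ₂ ρ₃))
  | merge_inter' {ρ₁ ρ₂ ρ₃ : Ty} : IsRec ρ₁ → IsRec ρ₂ → IsRec ρ₃ →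
      TySub (.inter (.merge ρ₁ ρ₃) (.merge ρ₂ ρ₃)) (.merge (.inter ρ₁ ρ₂) ρ₃)
  | fld_absorb {ρ : Ty} (l : Nat) (σ τ : Ty) : IsRec ρ →
      TySub (.merge (.fld l σ) (.inter (.fld l τ) ρ)) (.inter (.fld l τ) ρ)
  | fld_absorb' {ρ : Ty} (l : Nat) (σ τ : Ty) : IsRec ρ →
      TySub (.inter (.fld l τ) ρ) (.merge (.fld l σ) (.inter (.fld l τ) ρ))
  | fld_comm {ρ : Ty} {l l' : Nat} (σ τ : Ty) : l ≠ l' → IsRec ρ →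
      TySub (.merge (.fld l σ) (.inter (.fld l' τ) ρ))
          (.inter (.fld l' τ) (.merge (.fld l σ) ρ))
  | fld_comm' {ρ : Ty} {l l' : Nat} (σ τ : Ty) : l ≠ l' → IsRec ρ →
      TySub (.inter (.fld l' τ) (.merge (.fld l σ) ρ))
          (.merge (.fld l σ) (.inter (.fld l' τ) ρ))
  | merge_mono_l {ρ₁ ρ₂ ρ : Ty} : IsRec ρ₁ → IsRec ρ₂ → IsRec ρ →
      TySub ρ₁ ρ₂ → TySub (.merge ρ₁ ρ) (.merge ρ₂ ρ)
  | merge_congr_r {ρ ρ₁ ρ₂ : Ty} : IsRec ρ → IsRec ρ₁ → IsRec ρ₂ →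
      TySub ρ₁ ρ₂ → TySub ρ₂ ρ₁ → TySub (.merge ρ ρ₁) (.merge ρ ρ₂)

/-- Type equality: mutual subtyping. -/
def TyEq (σ τ : Ty) : Prop := TySub σ τ ∧ TySub τ σ
/-- `⟨l : σ_l | l ∈ I⟩`: the intersection of unary record types over a list of labels. -/
def recTy (σ : Nat → Ty) : List Nat → Ty
  | [] => .empty
  | [l] => .fld l (σ l)
  | l :: l' :: ls => .inter (.fld l (σ l)) (recTy σ (l' :: ls))

lemma recTy_le_empty (σ : Nat → Ty) : ∀ I : List Nat, TySub (recTy σ I) .empty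
  | [] => .refl _
  | [l] => .fld_empty l (σ l)
  | _ :: _ :: _ => .trans (.inter_left _ _) (.fld_empty _ _)

lemma recTy_le_fld (σ : Nat → Ty) {l : Nat} :
    ∀ {I : List Nat}, l ∈ I → TySub (recTy σ I) (.fld l (σ l))
  | [], h => by simp at h
  | [m], h => by
      simp at h; subst h; exact .refl _
  | m :: m' :: ms, h => by
      rcases List.mem_cons.mp h with h | h
      · subst h; exact .inter_left _ _
      · exact .trans (.inter_right _ _) (recTy_le_fld σ h)

lemma le_recTy (σ : Nat → Ty) {X : Ty} :
    ∀ {I : List Nat}, TySub X .empty → (∀ l ∈ I, TySub X (.fld l (σ l))) →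
      TySub X (recTy σ I)
  | [], he, _ => he
  | [m], _, hf => hf m (by simp)
  | m :: m' :: ms, he, hf =>
      .le_inter (hf m (by simp))
        (le_recTy σ he (fun l hl => hf l (List.mem_cons_of_mem _ hl)))

lemma fld_inter_le {l : Nat} {X σ τ : Ty} (h1 : TySub X (.fld l σ))
    (h2 : TySub X (.fld l τ)) : TySub X (.fld l (.inter σ τ)) :=
  .trans (.le_inter h1 h2) (.fld_inter l σ τ)

/-- Intersection of two record types: entries `σ_l` on `I∖J`, `τ_l` on `J∖I`,
and `σ_l ∩ τ_l` on `I ∩ J`. -/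
theorem record_inter (I J : List Nat) (hI : I.Nodup) (hJ : J.Nodup)
    (σ τ : Nat → Ty) :
    TyEq (.inter (recTy σ I) (recTy τ J))
      (recTy
        (fun l => if l ∈ J then (if l ∈ I then .inter (σ l) (τ l) else τ l) else σ l)
        (I ++ J.filter (fun l => decide (l ∉ I)))) := by
  set υ : Nat → Ty :=
    fun l => if l ∈ J then (if l ∈ I then .inter (σ l) (τ l) else τ l) else σ l with hυ
  constructor
  · apply le_recTy
    · exact .trans (.inter_left _ _) (recTy_le_empty σ I)
    · intro l hl
      have hL : TySub (Ty.inter (recTy σ I) (recTy τ J)) (recTy σ I) := .inter_left _ _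
      have hR : TySub (Ty.inter (recTy σ I) (recTy τ J)) (recTy τ J) := .inter_right _ _
      rcases List.mem_append.mp hl with hI' | hF
      · by_cases hJ' : l ∈ J
        · simp only [hυ, if_pos hJ', if_pos hI']
          exact fld_inter_le (hL.trans (recTy_le_fld σ hI')) (hR.trans (recTy_le_fld τ hJ'))
        · simp only [hυ, if_neg hJ']
          exact hL.trans (recTy_le_fld σ hI')
      · have := List.mem_filter.mp hF
        have hJ' : l ∈ J := this.1
        have hI' : l ∉ I := by simpa using this.2
        simp only [hυ, if_pos hJ', if_neg hI']
        exact hR.trans (recTy_le_fld τ hJ')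
  · have hKempty : TySub (recTy υ (I ++ J.filter (fun l => decide (l ∉ I)))) .empty :=
      recTy_le_empty υ _
    apply TySub.le_inter
    · apply le_recTy _ hKempty
      intro l hl
      have hK : l ∈ I ++ J.filter (fun l => decide (l ∉ I)) :=
        List.mem_append.mpr (Or.inl hl)
      have h := recTy_le_fld υ hK
      by_cases hJ' : l ∈ J
      · simp only [hυ, if_pos hJ', if_pos hl] at h
        exact h.trans (.fld_mono l (.inter_left _ _))
      · simpa only [hυ, if_neg hJ'] using h
    · apply le_recTy _ hKempty
      intro l hl
      by_cases hI' : l ∈ I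
      · have hK : l ∈ I ++ J.filter (fun l => decide (l ∉ I)) :=
          List.mem_append.mpr (Or.inl hI')
        have h := recTy_le_fld υ hK
        simp only [hυ, if_pos hl, if_pos hI'] at h
        exact h.trans (.fld_mono l (.inter_right _ _))
      · have hK : l ∈ I ++ J.filter (fun l => decide (l ∉ I)) :=
          List.mem_append.mpr (Or.inr (List.mem_filter.mpr ⟨hl, by simpa using hI'⟩))
        have h := recTy_le_fld υ hK
        simpa only [hυ, if_pos hl, if_neg hI'] using h
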